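/- arXiv:2205.08622 — 3 statements merged into one kernel-verified Lean document; each statement's English description precedes it below -/
import Mathlib

section
/- Let u₁, u₂ : [0,T] → ℝ^k be piecewise smooth with exactly one discontinuity each, at β₁ and β₂ respectively, with β₁ ≤ β₂, and with one-sided limits u₁⁻, u₁⁺ at β₁ and u₂⁻, u₂⁺ at β₂. Then ‖u₁⁺ - u₂⁺‖ + ‖u₁⁻ - u₂⁻‖ ≤ (2 + ‖u̇₁‖_∞ + ‖u̇₂‖_∞) · d(u₁,u₂), where d(u₁,u₂) = max{‖u₁-u₂‖_{L^∞(0,β₁)}, ‖u₁-u₂‖_{L^∞(β₂,T)}, |β₁-β₂|} and ‖u̇ᵢ‖_∞ is the maximum of the essential supremum of ‖u̇ᵢ‖ on (0,βᵢ) and (βᵢ,T). -/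
open Set Filter Topology

/-- The two-piece semimetric `d(u₁,u₂)` for piecewise smooth functions with
breakpoints `β₁, β₂`: the max of the sup distance on `(0, min β₁ β₂)`, the sup
distance on `(max β₁ β₂, T)`, and `|β₁ - β₂|`. -/
noncomputable def pieceDist {k : ℕ} (T β₁ β₂ : ℝ)
    (u₁ u₂ : ℝ → EuclideanSpace ℝ (Fin k)) : ℝ :=
  max (max (sSup ((fun t => ‖u₁ t - u₂ t‖) '' Ioo 0 (min β₁ β₂)))
        (sSup ((fun t => ‖u₁ t - u₂ t‖) '' Ioo (max β₁ β₂) T)))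
    |β₁ - β₂|

lemma lipOn {k : ℕ} {u : ℝ → EuclideanSpace ℝ (Fin k)} {a b D : ℝ}
    (hu : ContDiffOn ℝ (⊤ : ℕ∞) u (Ioo a b)) (hD : ∀ t ∈ Ioo a b, ‖deriv u t‖ ≤ D)
    {s t : ℝ} (hs : s ∈ Ioo a b) (ht : t ∈ Ioo a b) : ‖u t - u s‖ ≤ D * |t - s| := by
  have hdiff : ∀ x ∈ Ioo a b, DifferentiableAt ℝ u x := fun x hx =>
    (hu.differentiableOn (by simp)).differentiableAt (isOpen_Ioo.mem_nhds hx)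
  simpa [Real.norm_eq_abs] using
    (convex_Ioo a b).norm_image_sub_le_of_norm_deriv_le hdiff hD hs ht

/-- Lemma A.3, estimate of one-sided limits.
For piecewise smooth functions `u₁, u₂` with single discontinuities at `β₁ ≤ β₂`,
one-sided limits `uᵢ∓`, and derivative bounds `Duᵢ` on the smooth pieces,
`‖u₁⁺ - u₂⁺‖ + ‖u₁⁻ - u₂⁻‖ ≤ (2 + Du₁ + Du₂) · d(u₁,u₂)`. -/
theorem stmt1 {k : ℕ} (T β₁ β₂ Du₁ Du₂ : ℝ)
    (u₁ u₂ : ℝ → EuclideanSpace ℝ (Fin k))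
    (u₁m u₁p u₂m u₂p : EuclideanSpace ℝ (Fin k))
    (hβ₁ : β₁ ∈ Ioo (0:ℝ) T) (hβ₂ : β₂ ∈ Ioo (0:ℝ) T) (h12 : β₁ ≤ β₂)
    (hs₁a : ContDiffOn ℝ (⊤ : ℕ∞) u₁ (Ioo 0 β₁)) (hs₁b : ContDiffOn ℝ (⊤ : ℕ∞) u₁ (Ioo β₁ T))
    (hs₂a : ContDiffOn ℝ (⊤ : ℕ∞) u₂ (Ioo 0 β₂)) (hs₂b : ContDiffOn ℝ (⊤ : ℕ∞) u₂ (Ioo β₂ T))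
    (hD₁ : ∀ t ∈ Ioo (0:ℝ) β₁ ∪ Ioo β₁ T, ‖deriv u₁ t‖ ≤ Du₁)
    (hD₂ : ∀ t ∈ Ioo (0:ℝ) β₂ ∪ Ioo β₂ T, ‖deriv u₂ t‖ ≤ Du₂)
    (hl₁m : Tendsto u₁ (𝓝[<] β₁) (𝓝 u₁m)) (hl₁p : Tendsto u₁ (𝓝[>] β₁) (𝓝 u₁p))
    (hl₂m : Tendsto u₂ (𝓝[<] β₂) (𝓝 u₂m)) (hl₂p : Tendsto u₂ (𝓝[>] β₂) (𝓝 u₂p)) :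
    ‖u₁p - u₂p‖ + ‖u₁m - u₂m‖ ≤ (2 + Du₁ + Du₂) * pieceDist T β₁ β₂ u₁ u₂ := by
  obtain ⟨hβ₁0, hβ₁T⟩ := hβ₁
  obtain ⟨hβ₂0, hβ₂T⟩ := hβ₂
  have hD₁a : ∀ t ∈ Ioo (0:ℝ) β₁, ‖deriv u₁ t‖ ≤ Du₁ := fun t ht => hD₁ t (Or.inl ht)
  have hD₁b : ∀ t ∈ Ioo β₁ T, ‖deriv u₁ t‖ ≤ Du₁ := fun t ht => hD₁ t (Or.inr ht)
  have hD₂a : ∀ t ∈ Ioo (0:ℝ) β₂, ‖deriv u₂ t‖ ≤ Du₂ := fun t ht => hD₂ t (Or.inl ht)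
  -- nonnegativity of derivative bounds
  have hq₁ : β₁ / 2 ∈ Ioo (0:ℝ) β₁ := ⟨by linarith, by linarith⟩
  have hq₂ : (β₂ + T) / 2 ∈ Ioo β₂ T := ⟨by linarith, by linarith⟩
  have hDu₁ : 0 ≤ Du₁ := le_trans (norm_nonneg _) (hD₁a _ hq₁)
  have hDu₂ : 0 ≤ Du₂ := le_trans (norm_nonneg _) (hD₂a _ ⟨hq₁.1, lt_of_lt_of_le hq₁.2 h12⟩)
  set d := pieceDist T β₁ β₂ u₁ u₂ with hd
  set S₁ := (fun t => ‖u₁ t - u₂ t‖) '' Ioo 0 β₁ with hS₁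
  set S₂ := (fun t => ‖u₁ t - u₂ t‖) '' Ioo β₂ T with hS₂
  have hdeq : d = max (max (sSup S₁) (sSup S₂)) |β₁ - β₂| := by
    rw [hd, pieceDist, min_eq_left h12, max_eq_right h12]
  -- BddAbove S₁
  have hbdd₁ : BddAbove S₁ := by
    refine ⟨‖u₁ (β₁/2) - u₂ (β₁/2)‖ + Du₁ * β₁ + Du₂ * β₂, ?_⟩
    rintro x ⟨t, ht, rfl⟩
    have h1 : ‖u₁ t - u₁ (β₁/2)‖ ≤ Du₁ * |t - β₁/2| := lipOn hs₁a hD₁a hq₁ ht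
    have ht' : t ∈ Ioo (0:ℝ) β₂ := ⟨ht.1, lt_of_lt_of_le ht.2 h12⟩
    have hq₁' : β₁/2 ∈ Ioo (0:ℝ) β₂ := ⟨hq₁.1, lt_of_lt_of_le hq₁.2 h12⟩
    have h2 : ‖u₂ t - u₂ (β₁/2)‖ ≤ Du₂ * |t - β₁/2| := lipOn hs₂a hD₂a hq₁' ht'
    have habs : |t - β₁/2| ≤ β₁ := by
      rw [abs_le]; constructor <;> [linarith [ht.1, hq₁.2]; linarith [ht.2, hq₁.1]]
    have hb1 : Du₁ * |t - β₁/2| ≤ Du₁ * β₁ := mul_le_mul_of_nonneg_left habs hDu₁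
    have hb2 : Du₂ * |t - β₁/2| ≤ Du₂ * β₂ :=
      mul_le_mul_of_nonneg_left (habs.trans h12) hDu₂
    calc ‖u₁ t - u₂ t‖ ≤ ‖u₁ t - u₁ (β₁/2)‖ + ‖u₁ (β₁/2) - u₂ (β₁/2)‖ + ‖u₂ (β₁/2) - u₂ t‖ := by
          have := norm_add₃_le (a := u₁ t - u₁ (β₁/2)) (b := u₁ (β₁/2) - u₂ (β₁/2))
            (c := u₂ (β₁/2) - u₂ t)
          simpa using this
      _ ≤ Du₁ * β₁ + ‖u₁ (β₁/2) - u₂ (β₁/2)‖ + Du₂ * β₂ := by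
          have h2' : ‖u₂ (β₁/2) - u₂ t‖ ≤ Du₂ * |t - β₁/2| := by
            rw [norm_sub_rev]; exact h2
          linarith [h1.trans hb1, h2'.trans hb2]
      _ = ‖u₁ (β₁/2) - u₂ (β₁/2)‖ + Du₁ * β₁ + Du₂ * β₂ := by ring
  -- BddAbove S₂
  have hbdd₂ : BddAbove S₂ := by
    set t₀ := (β₂ + T) / 2
    refine ⟨‖u₁ t₀ - u₂ t₀‖ + Du₁ * (T - β₁) + Du₂ * (T - β₂), ?_⟩
    rintro x ⟨t, ht, rfl⟩
    have ht1 : t ∈ Ioo β₁ T := ⟨lt_of_le_of_lt h12 ht.1, ht.2⟩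
    have hq1 : t₀ ∈ Ioo β₁ T := ⟨lt_of_le_of_lt h12 hq₂.1, hq₂.2⟩
    have h1 : ‖u₁ t - u₁ t₀‖ ≤ Du₁ * |t - t₀| := lipOn hs₁b hD₁b hq1 ht1
    have h2 : ‖u₂ t - u₂ t₀‖ ≤ Du₂ * |t - t₀| :=
      lipOn hs₂b (fun s hs => hD₂ s (Or.inr hs)) hq₂ ht
    have habs1 : |t - t₀| ≤ T - β₁ := by
      rw [abs_le]; constructor <;> [linarith [ht1.1, hq1.2]; linarith [ht1.2, hq1.1]]
    have habs2 : |t - t₀| ≤ T - β₂ := by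
      rw [abs_le]; constructor <;> [linarith [ht.1, hq₂.2]; linarith [ht.2, hq₂.1]]
    have hb1 : Du₁ * |t - t₀| ≤ Du₁ * (T - β₁) := mul_le_mul_of_nonneg_left habs1 hDu₁
    have hb2 : Du₂ * |t - t₀| ≤ Du₂ * (T - β₂) := mul_le_mul_of_nonneg_left habs2 hDu₂
    calc ‖u₁ t - u₂ t‖ ≤ ‖u₁ t - u₁ t₀‖ + ‖u₁ t₀ - u₂ t₀‖ + ‖u₂ t₀ - u₂ t‖ := by
          have := norm_add₃_le (a := u₁ t - u₁ t₀) (b := u₁ t₀ - u₂ t₀) (c := u₂ t₀ - u₂ t)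
          simpa using this
      _ ≤ Du₁ * (T - β₁) + ‖u₁ t₀ - u₂ t₀‖ + Du₂ * (T - β₂) := by
          have h2' : ‖u₂ t₀ - u₂ t‖ ≤ Du₂ * |t - t₀| := by rw [norm_sub_rev]; exact h2
          linarith [h1.trans hb1, h2'.trans hb2]
      _ = ‖u₁ t₀ - u₂ t₀‖ + Du₁ * (T - β₁) + Du₂ * (T - β₂) := by ring
  have hM₁ : ∀ t ∈ Ioo (0:ℝ) β₁, ‖u₁ t - u₂ t‖ ≤ sSup S₁ :=
    fun t ht => le_csSup hbdd₁ ⟨t, ht, rfl⟩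
  have hM₂ : ∀ t ∈ Ioo β₂ T, ‖u₁ t - u₂ t‖ ≤ sSup S₂ :=
    fun t ht => le_csSup hbdd₂ ⟨t, ht, rfl⟩
  -- one-sided limit Lipschitz bounds
  have key₂m : ∀ t ∈ Ioo (0:ℝ) β₂, ‖u₂ t - u₂m‖ ≤ Du₂ * |t - β₂| := by
    intro t ht
    have hmem : ∀ᶠ s in 𝓝[<] β₂, s ∈ Ioo (0:ℝ) β₂ :=
      Ioo_mem_nhdsLT_of_mem ⟨hβ₂0, le_refl β₂⟩
    have hf : Tendsto (fun s => ‖u₂ t - u₂ s‖) (𝓝[<] β₂) (𝓝 ‖u₂ t - u₂m‖) :=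
      (tendsto_const_nhds.sub hl₂m).norm
    have hg : Tendsto (fun s => Du₂ * |t - s|) (𝓝[<] β₂) (𝓝 (Du₂ * |t - β₂|)) := by
      exact tendsto_const_nhds.mul
        ((tendsto_const_nhds.sub (tendsto_id.mono_left nhdsWithin_le_nhds)).abs)
    refine le_of_tendsto_of_tendsto hf hg (hmem.mono fun s hs => ?_)
    have h := lipOn hs₂a hD₂a hs ht
    calc ‖u₂ t - u₂ s‖ ≤ Du₂ * |t - s| := h
      _ ≤ Du₂ * |t - s| := le_refl _
  have key₁p : ∀ t ∈ Ioo β₁ T, ‖u₁ t - u₁p‖ ≤ Du₁ * |t - β₁| := by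
    intro t ht
    have hmem : ∀ᶠ s in 𝓝[>] β₁, s ∈ Ioo β₁ T :=
      Ioo_mem_nhdsGT_of_mem ⟨le_refl β₁, hβ₁T⟩
    have hf : Tendsto (fun s => ‖u₁ t - u₁ s‖) (𝓝[>] β₁) (𝓝 ‖u₁ t - u₁p‖) :=
      (tendsto_const_nhds.sub hl₁p).norm
    have hg : Tendsto (fun s => Du₁ * |t - s|) (𝓝[>] β₁) (𝓝 (Du₁ * |t - β₁|)) :=
      tendsto_const_nhds.mul
        ((tendsto_const_nhds.sub (tendsto_id.mono_left nhdsWithin_le_nhds)).abs)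
    exact le_of_tendsto_of_tendsto hf hg (hmem.mono fun s hs => lipOn hs₁b hD₁b hs ht)
  -- Estimate A : ‖u₁m - u₂m‖
  have hA : ‖u₁m - u₂m‖ ≤ sSup S₁ + Du₂ * |β₁ - β₂| := by
    have hmem : ∀ᶠ t in 𝓝[<] β₁, t ∈ Ioo (0:ℝ) β₁ :=
      Ioo_mem_nhdsLT_of_mem ⟨hβ₁0, le_refl β₁⟩
    have hf : Tendsto (fun t => ‖u₁ t - u₂m‖) (𝓝[<] β₁) (𝓝 ‖u₁m - u₂m‖) :=
      (hl₁m.sub tendsto_const_nhds).norm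
    have hg : Tendsto (fun t => sSup S₁ + Du₂ * |t - β₂|) (𝓝[<] β₁)
        (𝓝 (sSup S₁ + Du₂ * |β₁ - β₂|)) :=
      tendsto_const_nhds.add (tendsto_const_nhds.mul
        (((tendsto_id.mono_left nhdsWithin_le_nhds).sub tendsto_const_nhds).abs))
    refine le_of_tendsto_of_tendsto hf hg (hmem.mono fun t ht => ?_)
    have ht' : t ∈ Ioo (0:ℝ) β₂ := ⟨ht.1, lt_of_lt_of_le ht.2 h12⟩
    calc ‖u₁ t - u₂m‖ ≤ ‖u₁ t - u₂ t‖ + ‖u₂ t - u₂m‖ := by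
          have := norm_add_le (u₁ t - u₂ t) (u₂ t - u₂m); simpa using this
      _ ≤ sSup S₁ + Du₂ * |t - β₂| := add_le_add (hM₁ t ht) (key₂m t ht')
  -- Estimate B : ‖u₁p - u₂p‖
  have hB : ‖u₁p - u₂p‖ ≤ sSup S₂ + Du₁ * |β₁ - β₂| := by
    have hmem : ∀ᶠ t in 𝓝[>] β₂, t ∈ Ioo β₂ T :=
      Ioo_mem_nhdsGT_of_mem ⟨le_refl β₂, hβ₂T⟩
    have hf : Tendsto (fun t => ‖u₁p - u₂ t‖) (𝓝[>] β₂) (𝓝 ‖u₁p - u₂p‖) :=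
      (tendsto_const_nhds.sub hl₂p).norm
    have hg : Tendsto (fun t => sSup S₂ + Du₁ * |t - β₁|) (𝓝[>] β₂)
        (𝓝 (sSup S₂ + Du₁ * |β₂ - β₁|)) :=
      tendsto_const_nhds.add (tendsto_const_nhds.mul
        (((tendsto_id.mono_left nhdsWithin_le_nhds).sub tendsto_const_nhds).abs))
    have h' : ‖u₁p - u₂p‖ ≤ sSup S₂ + Du₁ * |β₂ - β₁| := by
      refine le_of_tendsto_of_tendsto hf hg (hmem.mono fun t ht => ?_)
      have ht' : t ∈ Ioo β₁ T := ⟨lt_of_le_of_lt h12 ht.1, ht.2⟩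
      calc ‖u₁p - u₂ t‖ ≤ ‖u₁p - u₁ t‖ + ‖u₁ t - u₂ t‖ := by
            have := norm_add_le (u₁p - u₁ t) (u₁ t - u₂ t); simpa using this
        _ ≤ Du₁ * |t - β₁| + sSup S₂ := by
            have := key₁p t ht'
            rw [norm_sub_rev] at this
            exact add_le_add this (hM₂ t ht)
        _ = sSup S₂ + Du₁ * |t - β₁| := by ring
    rwa [abs_sub_comm β₂ β₁] at h'
  -- conclusion
  have h1 : sSup S₁ ≤ d := by rw [hdeq]; exact le_max_of_le_left (le_max_left _ _)
  have h2 : sSup S₂ ≤ d := by rw [hdeq]; exact le_max_of_le_left (le_max_right _ _)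
  have h3 : |β₁ - β₂| ≤ d := by rw [hdeq]; exact le_max_right _ _
  have h4 : Du₂ * |β₁ - β₂| ≤ Du₂ * d := mul_le_mul_of_nonneg_left h3 hDu₂
  have h5 : Du₁ * |β₁ - β₂| ≤ Du₁ * d := mul_le_mul_of_nonneg_left h3 hDu₁
  nlinarith [hA, hB]
end

section
/- Let u₁, u₂ ∈ (L¹ ∩ L^∞)(0,T; U) be piecewise smooth with two pieces with breakpoints β₁ ≤ β₂, with U bounded by M_u (i.e., ‖u(t)‖ ≤ M_u for all t). Then ‖u₁ - u₂‖_{L¹(0,T)} ≤ (T + 2M_u) · d(u₁,u₂), where d is the semimetric d(u₁,u₂) = max{‖u₁-u₂‖_{L^∞(0,β₁)}, ‖u₁-u₂‖_{L^∞(β₂,T)}, |β₁-β₂|}. -/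
open MeasureTheory Set Filter Topology

lemma aux_int_le (a b C : ℝ) (hab : a ≤ b) (g : ℝ → ℝ) (hg : Measurable g)
    (hbd : ∀ t ∈ Ioo a b, |g t| ≤ C) :
    ∫ t in a..b, g t ≤ (b - a) * C := by
  rcases eq_or_lt_of_le hab with rfl | hlt
  · simp
  have hC : 0 ≤ C := by
    have := hbd ((a + b) / 2) ⟨by linarith, by linarith⟩
    exact le_trans (abs_nonneg _) this
  rw [intervalIntegral.integral_of_le hab, MeasureTheory.integral_Ioc_eq_integral_Ioo]
  calc ∫ t in Ioo a b, g t ≤ ‖∫ t in Ioo a b, g t‖ := le_abs_self _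
    _ ≤ C * (volume (Ioo a b)).toReal := by
        apply MeasureTheory.norm_setIntegral_le_of_norm_le_const
        · simp [Real.volume_Ioo]
        · intro x hx; simpa using hbd x hx
    _ = (b - a) * C := by
        rw [Real.volume_Ioo, ENNReal.toReal_ofReal (by linarith)]; ring

/-- Lemma A.4, the semimetric controls the `L¹` norm.
For bounded (`‖uᵢ(t)‖ ≤ M_u`) piecewise smooth controls with single
discontinuities at `β₁ ≤ β₂` in `(0,T)`,
`‖u₁ - u₂‖_{L¹(0,T)} ≤ (T + 2 M_u) · d(u₁, u₂)`. -/
theorem stmt2 {k : ℕ} (T β₁ β₂ Mu : ℝ)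
    (u₁ u₂ : ℝ → EuclideanSpace ℝ (Fin k))
    (hT : 0 < T)
    (hβ₁ : β₁ ∈ Ioo (0:ℝ) T) (hβ₂ : β₂ ∈ Ioo (0:ℝ) T) (h12 : β₁ ≤ β₂)
    (hm₁ : Measurable u₁) (hm₂ : Measurable u₂)
    (hb₁ : ∀ t, ‖u₁ t‖ ≤ Mu) (hb₂ : ∀ t, ‖u₂ t‖ ≤ Mu)
    (hs₁a : ContDiffOn ℝ (⊤ : ℕ∞) u₁ (Ioo 0 β₁)) (hs₁b : ContDiffOn ℝ (⊤ : ℕ∞) u₁ (Ioo β₁ T))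
    (hs₂a : ContDiffOn ℝ (⊤ : ℕ∞) u₂ (Ioo 0 β₂)) (hs₂b : ContDiffOn ℝ (⊤ : ℕ∞) u₂ (Ioo β₂ T)) :
    (∫ t in (0:ℝ)..T, ‖u₁ t - u₂ t‖) ≤ (T + 2 * Mu) * pieceDist T β₁ β₂ u₁ u₂ := by
  set g : ℝ → ℝ := fun t => ‖u₁ t - u₂ t‖ with hg_def
  have hg : Measurable g := (hm₁.sub hm₂).norm
  have hg2Mu : ∀ t, g t ≤ 2 * Mu := fun t =>
    (norm_sub_le _ _).trans (by linarith [hb₁ t, hb₂ t])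
  have hMu : 0 ≤ Mu := le_trans (norm_nonneg _) (hb₁ 0)
  set S₁ := sSup (g '' Ioo 0 (min β₁ β₂)) with hS₁
  set S₂ := sSup (g '' Ioo (max β₁ β₂) T) with hS₂
  set D := pieceDist T β₁ β₂ u₁ u₂ with hD
  have hmin : min β₁ β₂ = β₁ := min_eq_left h12
  have hmax : max β₁ β₂ = β₂ := max_eq_right h12
  have hbdd₁ : ∀ t ∈ Ioo (0:ℝ) β₁, g t ≤ S₁ := by
    intro t ht
    have hbd : BddAbove (g '' Ioo 0 (min β₁ β₂)) := by
      refine ⟨2 * Mu, ?_⟩; rintro x ⟨y, _, rfl⟩; exact hg2Mu y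
    exact le_csSup hbd ⟨t, by rw [hmin]; exact ht, rfl⟩
  have hbdd₂ : ∀ t ∈ Ioo β₂ T, g t ≤ S₂ := by
    intro t ht
    have hbd : BddAbove (g '' Ioo (max β₁ β₂) T) := by
      refine ⟨2 * Mu, ?_⟩; rintro x ⟨y, _, rfl⟩; exact hg2Mu y
    exact le_csSup hbd ⟨t, by rw [hmax]; exact ht, rfl⟩
  have hS₁D : S₁ ≤ D := le_max_of_le_left (le_max_left _ _)
  have hS₂D : S₂ ≤ D := le_max_of_le_left (le_max_right _ _)
  have habsD : |β₁ - β₂| ≤ D := le_max_right _ _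
  have hD0 : 0 ≤ D := le_trans (abs_nonneg _) habsD
  have hgnn : ∀ t, 0 ≤ g t := fun t => norm_nonneg _
  -- split the integral
  have hsplit : (∫ t in (0:ℝ)..T, g t) =
      (∫ t in (0:ℝ)..β₁, g t) + (∫ t in β₁..β₂, g t) + (∫ t in β₂..T, g t) := by
    have hint : IntervalIntegrable g volume 0 T := by
      rw [intervalIntegrable_iff]
      have hc : IntegrableOn (fun _ => 2 * Mu) (Set.uIoc (0:ℝ) T) volume := by
        apply integrableOn_const ?_ enorm_ne_top
        rw [Set.uIoc, Real.volume_Ioc]; exact ENNReal.ofReal_ne_top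
      refine hc.mono' hg.aestronglyMeasurable.restrict ?_
      filter_upwards with t
      rw [Real.norm_eq_abs, abs_of_nonneg (hgnn t)]; exact hg2Mu t
    rw [intervalIntegral.integral_add_adjacent_intervals,
        intervalIntegral.integral_add_adjacent_intervals]
    all_goals
      refine hint.mono_set (uIcc_subset_uIcc ?_ ?_) <;>
        · rw [uIcc_of_le hT.le]
          constructor <;> linarith [hβ₁.1, hβ₁.2, hβ₂.1, hβ₂.2]
  have h1 : (∫ t in (0:ℝ)..β₁, g t) ≤ (β₁ - 0) * S₁ := by
    apply aux_int_le _ _ _ hβ₁.1.le g hg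
    intro t ht; rw [abs_of_nonneg (hgnn t)]; exact hbdd₁ t ht
  have h2 : (∫ t in β₁..β₂, g t) ≤ (β₂ - β₁) * (2 * Mu) := by
    apply aux_int_le _ _ _ h12 g hg
    intro t _; rw [abs_of_nonneg (hgnn t)]; exact hg2Mu t
  have h3 : (∫ t in β₂..T, g t) ≤ (T - β₂) * S₂ := by
    apply aux_int_le _ _ _ hβ₂.2.le g hg
    intro t ht; rw [abs_of_nonneg (hgnn t)]; exact hbdd₂ t ht
  have hS₁D' : (β₁ - 0) * S₁ ≤ β₁ * D :=
    mul_le_mul_of_nonneg_left hS₁D (by linarith [hβ₁.1.le]) |>.trans_eq (by ring) |>.trans_eq rfl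
  have habs : β₂ - β₁ ≤ D := by
    have : |β₁ - β₂| = β₂ - β₁ := by rw [abs_sub_comm, abs_of_nonneg (by linarith)]
    linarith [habsD, this.symm.le]
  calc (∫ t in (0:ℝ)..T, g t)
      = (∫ t in (0:ℝ)..β₁, g t) + (∫ t in β₁..β₂, g t) + (∫ t in β₂..T, g t) := hsplit
    _ ≤ (β₁ - 0) * S₁ + (β₂ - β₁) * (2 * Mu) + (T - β₂) * S₂ := by linarith
    _ ≤ β₁ * D + 2 * Mu * D + (T - β₂) * D := by
        have e1 : (β₁ - 0) * S₁ ≤ β₁ * D := by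
          have := mul_le_mul_of_nonneg_left hS₁D hβ₁.1.le; linarith
        have e2 : (β₂ - β₁) * (2 * Mu) ≤ 2 * Mu * D := by
          have := mul_le_mul_of_nonneg_left habs (by linarith : (0:ℝ) ≤ 2 * Mu)
          linarith
        have e3 : (T - β₂) * S₂ ≤ (T - β₂) * D :=
          mul_le_mul_of_nonneg_left hS₂D (by linarith [hβ₂.2.le])
        linarith
    _ ≤ (T + 2 * Mu) * D := by nlinarith [hD0, h12]
end

section
/- Under the assumptions of the preceding lemma (v(t) = d/dt ψ(x(t)) satisfies |v(t)-v(γ⁻)| ≤ C|t-γ| for t < γ), if u has only one collision at γ with v(γ⁻) < 0, and u is smooth for t < γ, then ψ(x(t)) is monotone decreasing on (γ + v(γ⁻)/C, γ) and for all t in that interval, ψ(x(t)) - v(γ⁻)(t-γ) ∈ [-(C/2)(t-γ)², (C/2)(t-γ)²]. In particular ψ(x(t)) ≥ (-v(γ⁻)/2)(γ - t) for t ≥ γ + v(γ⁻)/C. -/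
open Set Filter Topology

/-
Write `a = γ` and `c = v(γ⁻)`. With `g(s) = ψ(x(s)) - c (s - a)` and `B(s) = C/2 (s - a)²`, the
hypothesis says `|g'| ≤ -B'` on `(-∞, a)`, so `B + g` and `B - g` are antitone there; as both tend
to `0` at `a⁻`, both are nonnegative, which is the two-sided quadratic bound. Monotonicity is the
estimate `v(s) ≤ c + C (a - s) < 0` for `s > a + c/C`, and the linear lower bound is the quadratic
bound combined with `C (a - t) ≤ -c`.
-/

theorem antitoneOn_of_hasDerivAt_nonpos {D : Set ℝ} (hD : Convex ℝ D) {f f' : ℝ → ℝ}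
    (hf : ∀ x ∈ D, HasDerivAt f (f' x) x) (hf'₀ : ∀ x ∈ D, f' x ≤ 0) : AntitoneOn f D :=
  antitoneOn_of_hasDerivWithinAt_nonpos hD
    (fun x hx => (hf x hx).continuousAt.continuousWithinAt)
    (fun x hx => (hf x (interior_subset hx)).hasDerivWithinAt)
    (fun x hx => hf'₀ x (interior_subset hx))

theorem nonneg_of_hasDerivAt_nonpos_of_tendsto_nhdsLT {f f' : ℝ → ℝ} {a : ℝ}
    (hf : ∀ s < a, HasDerivAt f (f' s) s) (hf'₀ : ∀ s < a, f' s ≤ 0)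
    (hlim : Tendsto f (𝓝[<] a) (𝓝 0)) {t : ℝ} (ht : t < a) : 0 ≤ f t := by
  have hanti : AntitoneOn f (Iio a) := antitoneOn_of_hasDerivAt_nonpos (convex_Iio a) hf hf'₀
  refine le_of_tendsto hlim ?_
  filter_upwards [Ioo_mem_nhdsLT ht] with s hs
  exact hanti ht hs.2 hs.1.le

theorem abs_le_of_tendsto_nhdsLT_of_abs_deriv_le {g g' B B' : ℝ → ℝ} {a : ℝ}
    (hg : ∀ s < a, HasDerivAt g (g' s) s) (hB : ∀ s < a, HasDerivAt B (B' s) s)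
    (hbound : ∀ s < a, |g' s| ≤ -B' s)
    (hg0 : Tendsto g (𝓝[<] a) (𝓝 0)) (hB0 : Tendsto B (𝓝[<] a) (𝓝 0))
    {t : ℝ} (ht : t < a) : |g t| ≤ B t := by
  have hadd : 0 ≤ B t + g t :=
    nonneg_of_hasDerivAt_nonpos_of_tendsto_nhdsLT (f := fun s => B s + g s)
      (fun s hs => (hB s hs).add (hg s hs))
      (fun s hs => by linarith [le_abs_self (g' s), hbound s hs])
      (by simpa using hB0.add hg0) ht
  have hsub : 0 ≤ B t - g t :=
    nonneg_of_hasDerivAt_nonpos_of_tendsto_nhdsLT (f := fun s => B s - g s)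
      (fun s hs => (hB s hs).sub (hg s hs))
      (fun s hs => by linarith [neg_abs_le (g' s), hbound s hs])
      (by simpa using hB0.sub hg0) ht
  exact abs_le.mpr ⟨by linarith, by linarith⟩

section LipschitzDerivative

variable {f f' : ℝ → ℝ} {a c C : ℝ}

theorem le_add_mul_of_abs_sub_le (hest : ∀ s < a, |f' s - c| ≤ C * |s - a|) {s : ℝ}
    (hs : s < a) : f' s ≤ c + C * (a - s) := by
  have h := (abs_le.mp (hest s hs)).2
  rw [abs_of_neg (sub_neg.mpr hs)] at h
  linarith

theorem abs_sub_mul_le_of_abs_deriv_sub_le (hf : ∀ s < a, HasDerivAt f (f' s) s)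
    (hest : ∀ s < a, |f' s - c| ≤ C * |s - a|) (hlim : Tendsto f (𝓝[<] a) (𝓝 0))
    {t : ℝ} (ht : t < a) : |f t - c * (t - a)| ≤ C / 2 * (t - a) ^ 2 := by
  have hlin (s : ℝ) : HasDerivAt (fun s : ℝ => s - a) 1 s := (hasDerivAt_id s).sub_const a
  have hvanish (p : ℝ → ℝ) (hp : Continuous p) (h0 : p a = 0) : Tendsto p (𝓝[<] a) (𝓝 0) :=
    (hp.tendsto' a 0 h0).mono_left nhdsWithin_le_nhds
  refine abs_le_of_tendsto_nhdsLT_of_abs_deriv_le (g := fun s => f s - c * (s - a))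
    (B := fun s => C / 2 * (s - a) ^ 2) (g' := fun s => f' s - c) (B' := fun s => C * (s - a))
    ?_ ?_ ?_ ?_ ?_ ht
  · intro s hs
    simpa using (hf s hs).fun_sub ((hlin s).const_mul c)
  · intro s _
    exact (((hlin s).pow 2).const_mul (C / 2)).congr_deriv (by push_cast; ring)
  · intro s hs
    have h := hest s hs
    rwa [abs_of_neg (sub_neg.mpr hs), mul_neg] at h
  · simpa using hlim.sub (hvanish _ (by fun_prop) (by simp))
  · exact hvanish _ (by fun_prop) (by simp)

theorem antitoneOn_Ioo_of_abs_deriv_sub_le (hC : 0 < C) (hf : ∀ s < a, HasDerivAt f (f' s) s)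
    (hest : ∀ s < a, |f' s - c| ≤ C * |s - a|) : AntitoneOn f (Ioo (a + c / C) a) :=
  antitoneOn_of_hasDerivAt_nonpos (convex_Ioo _ _) (fun s hs => hf s hs.2) fun s hs => by
      have hcs : c < C * (s - a) := by
        rw [mul_comm, ← div_lt_iff₀ hC]
        linarith [hs.1]
      linarith [le_add_mul_of_abs_sub_le hest hs.2]

end LipschitzDerivative

theorem stmt4_general {m : ℕ} (γ C vγ : ℝ) (hC : 0 < C)
    (ψ : EuclideanSpace ℝ (Fin m) → ℝ) (x : ℝ → EuclideanSpace ℝ (Fin m)) (v : ℝ → ℝ)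
    (hder : ∀ t < γ, HasDerivAt (fun s => ψ (x s)) (v t) t)
    (hest : ∀ t < γ, |v t - vγ| ≤ C * |t - γ|)
    (hlim : Tendsto (fun t => ψ (x t)) (𝓝[<] γ) (𝓝 0)) :
    AntitoneOn (fun t => ψ (x t)) (Ioo (γ + vγ / C) γ) ∧
    (∀ t ∈ Ioo (γ + vγ / C) γ,
      |ψ (x t) - vγ * (t - γ)| ≤ C / 2 * (t - γ) ^ 2) ∧
    (∀ t ∈ Ico (γ + vγ / C) γ, (-vγ / 2) * (γ - t) ≤ ψ (x t)) := by
  have hquad t (ht : t < γ) := abs_sub_mul_le_of_abs_deriv_sub_le hder hest hlim ht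
  refine ⟨antitoneOn_Ioo_of_abs_deriv_sub_le hC hder hest, fun t ht => hquad t ht.2, ?_⟩
  rintro t ⟨hlow, hlt⟩
  have hCt : C * (γ - t) ≤ -vγ := by
    have : vγ / C ≤ t - γ := by linarith
    rw [div_le_iff₀ hC] at this
    linarith
  nlinarith [(abs_le.mp (hquad t hlt)).1, sq_nonneg (t - γ)]

/-- local behaviour of `ψ(x(t))` before the collision.
If `v(t) = d/dt ψ(x(t))` satisfies `|v(t) - v(γ⁻)| ≤ C|t - γ|` for `t < γ`,
the (unique) collision happens at `γ` (`ψ(x(t)) → 0` as `t → γ⁻`), and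
`vγ = v(γ⁻) < 0`, then `ψ ∘ x` is monotone decreasing on `(γ + vγ/C, γ)`,
`ψ(x(t)) - vγ (t-γ) ∈ [-(C/2)(t-γ)², (C/2)(t-γ)²]` there, and
`ψ(x(t)) ≥ (-vγ/2)(γ - t)` for `t ≥ γ + vγ/C`. -/
theorem stmt4 {m : ℕ} (γ C vγ : ℝ) (hC : 0 < C) (hv : vγ < 0)
    (ψ : EuclideanSpace ℝ (Fin m) → ℝ) (x : ℝ → EuclideanSpace ℝ (Fin m)) (v : ℝ → ℝ)
    (hder : ∀ t < γ, HasDerivAt (fun s => ψ (x s)) (v t) t)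
    (hest : ∀ t < γ, |v t - vγ| ≤ C * |t - γ|)
    (hlim : Tendsto (fun t => ψ (x t)) (𝓝[<] γ) (𝓝 0)) :
    AntitoneOn (fun t => ψ (x t)) (Ioo (γ + vγ / C) γ) ∧
    (∀ t ∈ Ioo (γ + vγ / C) γ,
      |ψ (x t) - vγ * (t - γ)| ≤ C / 2 * (t - γ) ^ 2) ∧
    (∀ t ∈ Ico (γ + vγ / C) γ, (-vγ / 2) * (γ - t) ≤ ψ (x t)) :=
  stmt4_general γ C vγ hC ψ x v hder hest hlim
end
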